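/- Define φ : ℝ² → ℝ by φ(x,y) = x⁴ − y² if y² ≥ x⁴ and φ(x,y) = 0 if y² ≤ x⁴. Then: (a) φ is continuous and there exist continuous φ_1, ψ_2 with φ = φ_1·(x²+x⁴) + ψ_2·(x²+y²) (e.g. φ_1 ≡ 1 and ψ_2(x,y) = −1 for y² ≥ x⁴, ψ_2(x,y) = −(x²+x⁴)/(x²+y²) for 0 < y² ≤ x⁴, suitably extended); (b) for every continuous solution φ = φ_1·(x²+x⁴) + ψ_2·(x²+y²), one has ψ_2(0,0) = −1; in particular supp ψ_2 is not contained in supp φ. -/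

import Mathlib

/-!
Writing `a = x⁴ - y²`, we have `φ = min a 0 = a - max a 0`, and `max a 0 ≤ x²·(x² + y²)`, so
`max a 0 / (x² + y²)` extends continuously by `0` at the origin; this gives the solution
`φ₁ = 1`, `ψ₂ = -1 - max a 0 / (x² + y²)`. Conversely, on the axis `x = 0` the equation reads
`-y² = ψ₂(0,y)·y²`, so `ψ₂(0,y) = -1` for `y ≠ 0` and, by continuity, also at the origin. Since
`φ` vanishes on the open set `y² < x⁴`, whose closure contains the origin, a continuous `ψ₂`
supported in `supp φ` would vanish at the origin.
-/

open Filter Topology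

theorem ite_le_sub_eq_min {α : Type*} [AddCommGroup α] [LinearOrder α] [IsOrderedAddMonoid α]
    (a b : α) : (if a ≤ b then a - b else 0) = min (a - b) 0 := by
  split_ifs with h
  · exact (min_eq_left (sub_nonpos.mpr h)).symm
  · exact (min_eq_right (sub_nonneg.mpr (le_of_not_ge h))).symm

theorem ContinuousAt.eq_of_forall_ne {X Y : Type*} [TopologicalSpace X] [TopologicalSpace Y]
    [T2Space Y] {f : X → Y} {x : X} [(𝓝[≠] x).NeBot] {c : Y} (hf : ContinuousAt f x)
    (h : ∀ y ≠ x, f y = c) : f x = c :=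
  tendsto_nhds_unique (hf.tendsto.mono_left nhdsWithin_le_nhds)
    (tendsto_const_nhds.congr'
      (eventually_nhdsWithin_of_forall (s := {x}ᶜ) fun y hy => (h y hy).symm))

noncomputable def excessQuotient (p : ℝ × ℝ) : ℝ :=
  max (p.1 ^ 4 - p.2 ^ 2) 0 / (p.1 ^ 2 + p.2 ^ 2)

theorem excessQuotient_nonneg (p : ℝ × ℝ) : 0 ≤ excessQuotient p :=
  div_nonneg (le_max_right _ _) (by positivity)

theorem excessQuotient_le_sq_fst (p : ℝ × ℝ) : excessQuotient p ≤ p.1 ^ 2 :=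
  div_le_of_le_mul₀ (by positivity) (by positivity)
    (max_le (by nlinarith [sq_nonneg (p.1 * p.2), sq_nonneg p.2]) (by positivity))

theorem excessQuotient_mul (p : ℝ × ℝ) :
    excessQuotient p * (p.1 ^ 2 + p.2 ^ 2) = max (p.1 ^ 4 - p.2 ^ 2) 0 := by
  refine div_mul_cancel_of_imp fun h => ?_
  obtain ⟨hx, hy⟩ := (add_eq_zero_iff_of_nonneg (sq_nonneg p.1) (sq_nonneg p.2)).mp h
  rw [show p.1 ^ 4 = (p.1 ^ 2) ^ 2 by ring, hx, hy]
  simp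

theorem continuous_excessQuotient : Continuous excessQuotient := by
  refine continuous_iff_continuousAt.mpr fun p => ?_
  by_cases hp : p.1 ^ 2 + p.2 ^ 2 = 0
  · obtain ⟨hx, -⟩ := (add_eq_zero_iff_of_nonneg (sq_nonneg p.1) (sq_nonneg p.2)).mp hp
    have h0 : excessQuotient p = 0 := by simp [excessQuotient, hp]
    have hfst : Tendsto (fun q : ℝ × ℝ => q.1 ^ 2) (𝓝 p) (𝓝 0) := by
      simpa [hx] using (by fun_prop : Continuous fun q : ℝ × ℝ => q.1 ^ 2).tendsto p
    rw [ContinuousAt, h0]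
    exact squeeze_zero excessQuotient_nonneg excessQuotient_le_sq_fst hfst
  · exact ContinuousAt.div (by fun_prop) (by fun_prop) hp

theorem origin_mem_closure_setOf_sq_lt_pow_four :
    ((0 : ℝ), (0 : ℝ)) ∈ closure {p : ℝ × ℝ | p.2 ^ 2 < p.1 ^ 4} := by
  have hlim : Tendsto (fun t : ℝ => (t, (0 : ℝ))) (𝓝[≠] 0) (𝓝 (0, 0)) :=
    ((continuous_id.prodMk continuous_const).tendsto 0).mono_left nhdsWithin_le_nhds
  refine mem_closure_of_tendsto hlim (eventually_nhdsWithin_of_forall fun t ht => ?_)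
  simpa [← pow_mul] using pow_pos (sq_pos_of_ne_zero ht) 2

/-- For `φ(x,y) = x⁴ − y²` when `y² ≥ x⁴` and `0` otherwise: `φ` is continuous, the
equation `φ = φ₁·(x²+x⁴) + ψ₂·(x²+y²)` has a continuous solution, but every continuous
solution satisfies `ψ₂(0,0) = −1`; in particular the support of `ψ₂` is not contained
in the support of `φ`. -/
theorem statement16 (φ : ℝ × ℝ → ℝ)
    (hdef : ∀ p : ℝ × ℝ, φ p = if p.1 ^ 4 ≤ p.2 ^ 2 then p.1 ^ 4 - p.2 ^ 2 else 0) :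
    Continuous φ ∧
    (∃ φ₁ ψ₂ : ℝ × ℝ → ℝ, Continuous φ₁ ∧ Continuous ψ₂ ∧
      ∀ p : ℝ × ℝ, φ p = φ₁ p * (p.1 ^ 2 + p.1 ^ 4) + ψ₂ p * (p.1 ^ 2 + p.2 ^ 2)) ∧
    (∀ φ₁ ψ₂ : ℝ × ℝ → ℝ, Continuous φ₁ → Continuous ψ₂ →
      (∀ p : ℝ × ℝ, φ p = φ₁ p * (p.1 ^ 2 + p.1 ^ 4) + ψ₂ p * (p.1 ^ 2 + p.2 ^ 2)) →
      ψ₂ (0, 0) = -1 ∧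
      ¬ (closure {p : ℝ × ℝ | ψ₂ p ≠ 0} ⊆ closure {p : ℝ × ℝ | φ p ≠ 0})) := by
  have hsupp : closure {p : ℝ × ℝ | φ p ≠ 0} ⊆ {p | p.1 ^ 4 ≤ p.2 ^ 2} :=
    closure_minimal (fun p hp => not_not.mp fun h => hp ((hdef p).trans (if_neg h)))
      (isClosed_le (by fun_prop) (by fun_prop))
  obtain rfl : φ = fun p => min (p.1 ^ 4 - p.2 ^ 2) 0 :=
    funext fun p => (hdef p).trans (ite_le_sub_eq_min _ _)
  refine ⟨by fun_prop, ⟨fun _ => 1, fun p => -1 - excessQuotient p, continuous_const,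
    continuous_const.sub continuous_excessQuotient, fun p => ?_⟩, fun φ₁ ψ₂ _ hψ₂ heq => ?_⟩
  · linear_combination min_add_max (p.1 ^ 4 - p.2 ^ 2) 0 + excessQuotient_mul p
  have haxis : ∀ y ≠ (0 : ℝ), ψ₂ (0, y) = -1 := fun y hy => by
    refine mul_right_cancel₀ (pow_ne_zero 2 hy) ?_
    have hneg : (0 : ℝ) ^ 4 - y ^ 2 ≤ 0 := by simp [sq_nonneg]
    linear_combination -(heq (0, y)) + min_eq_left hneg
  have horigin : ψ₂ (0, 0) = -1 :=
    ContinuousAt.eq_of_forall_ne (f := fun y => ψ₂ (0, y)) (by fun_prop) haxis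
  refine ⟨horigin, fun hsub => ?_⟩
  have hzero : {p : ℝ × ℝ | p.2 ^ 2 < p.1 ^ 4} ⊆ {p | ψ₂ p = 0} :=
    Set.ofPred_subset_ofPred.mpr fun p hp =>
      not_not.mp fun hne => not_le.mpr hp (hsupp (hsub (subset_closure hne)))
  have hψ₂_origin : ψ₂ (0, 0) = 0 := closure_minimal hzero (isClosed_eq hψ₂ continuous_const)
    origin_mem_closure_setOf_sq_lt_pow_four
  norm_num [horigin] at hψ₂_origin
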